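/- For every k ≥ 0, the sign vector x♮_(k) ∈ {±1}^{2^k} satisfies ‖H_k x♮_(k)‖_∞ = 2^{⌈k/2⌉}; that is, ‖H_k x♮_(k)‖_∞ = √2 · √(2^k) if k is odd and ‖H_k x♮_(k)‖_∞ = √(2^k) if k is even. -/

import Mathlib

open scoped Matrix

/-- Canonical identification `Fin 2ᵏ ⊕ Fin 2ᵏ ≃ Fin 2ᵏ⁺¹` (first summand = first half). -/
def sumEquiv (k : ℕ) : Fin (2 ^ k) ⊕ Fin (2 ^ k) ≃ Fin (2 ^ (k + 1)) :=
  finSumFinEquiv.trans (finCongr (by rw [pow_succ]; ring))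

/-- The Sylvester–Hadamard matrices: `H 0 = (1)` and
`H (k+1) = [[H k, H k], [H k, −H k]]` (a `2ᵏ × 2ᵏ` matrix with `±1` entries). -/
def sylvesterHadamard : (k : ℕ) → Matrix (Fin (2 ^ k)) (Fin (2 ^ k)) ℝ
  | 0 => fun _ _ => 1
  | k + 1 =>
    Matrix.reindex (sumEquiv k) (sumEquiv k)
      (Matrix.fromBlocks (sylvesterHadamard k) (sylvesterHadamard k)
        (sylvesterHadamard k) (-(sylvesterHadamard k)))

/-- Canonical identification `Fin 2² × Fin 2ᵏ ≃ Fin 2ᵏ⁺²` (first factor most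
significant), under which `H (k+2) = H 2 ⊗ H k` as a Kronecker product. -/
def prodEquiv (k : ℕ) : Fin (2 ^ 2) × Fin (2 ^ k) ≃ Fin (2 ^ (k + 2)) :=
  finProdFinEquiv.trans (finCongr (by rw [← pow_add, Nat.add_comm]))

/-- The vector `y = (1, 1, 1, −1)`. -/
def ySign : Fin (2 ^ 2) → ℝ := ![1, 1, 1, -1]

/-- The sign vectors `x♮`: `x♮ 0 = (1)`, `x♮ 1 = (1, 1)` and `x♮ (k+2) = y ⊗ x♮ k`
(Kronecker product of vectors, via the canonical identification `prodEquiv`). -/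
def xNat : (k : ℕ) → (Fin (2 ^ k) → ℝ)
  | 0 => fun _ => 1
  | 1 => fun _ => 1
  | k + 2 => fun i =>
      ySign ((prodEquiv k).symm i).1 * xNat k ((prodEquiv k).symm i).2

/-- `x` is a sign vector: all its entries are `±1`. -/
def IsSignVec {n : ℕ} (x : Fin n → ℝ) : Prop := ∀ i, x i = 1 ∨ x i = -1

/-!
Since `H (k+2) (y ⊗ x) = (H 2 y) ⊗ (H k x)` and `H 2 y = (2, 2, 2, -2)`, the sup norm of
`H k x♮ k` doubles every two steps, starting from `‖H 0 x♮ 0‖ = 1` and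
`‖H 1 x♮ 1‖ = ‖(2, 0)‖ = 2`.
Concretely, `x♮ (k+2)` is the block vector `((x, x), (x, -x))` with `x = x♮ k`, and two block
steps `H (k+1) (a, b) = (H k a + H k b, H k a - H k b)` turn it into `((2w, 2w), (2w, -2w))`
with `w = H k x`.
-/

open Matrix

theorem pi_norm_sumElim {ι κ E : Type*} [Fintype ι] [Fintype κ] [SeminormedAddGroup E]
    (a : ι → E) (b : κ → E) : ‖Sum.elim a b‖ = max ‖a‖ ‖b‖ :=
  le_antisymm
    ((pi_norm_le_iff_of_nonneg (by positivity)).2 <| Sum.rec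
      (fun i => le_max_of_le_left (norm_le_pi_norm a i))
      (fun j => le_max_of_le_right (norm_le_pi_norm b j)))
    (max_le (pi_norm_comp_le (Sum.elim a b) Sum.inl) (pi_norm_comp_le (Sum.elim a b) Sum.inr))

def appendHalves {k : ℕ} (a b : Fin (2 ^ k) → ℝ) : Fin (2 ^ (k + 1)) → ℝ :=
  Sum.elim a b ∘ (sumEquiv k).symm

section appendHalves

variable {k : ℕ} (a b c d : Fin (2 ^ k) → ℝ)

theorem appendHalves_add :
    appendHalves a b + appendHalves c d = appendHalves (a + c) (b + d) := by
  simp only [appendHalves, Sum.elim_add_add, Pi.add_comp]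

theorem appendHalves_sub :
    appendHalves a b - appendHalves c d = appendHalves (a - c) (b - d) := by
  simp only [appendHalves, Sum.elim_sub_sub, Pi.sub_comp]

theorem norm_appendHalves : ‖appendHalves a b‖ = max ‖a‖ ‖b‖ := by
  rw [appendHalves, (sumEquiv k).symm.surjective.pi_norm_comp, pi_norm_sumElim]

theorem sylvesterHadamard_succ_mulVec_appendHalves :
    sylvesterHadamard (k + 1) *ᵥ appendHalves a b =
      appendHalves (sylvesterHadamard k *ᵥ a + sylvesterHadamard k *ᵥ b)
        (sylvesterHadamard k *ᵥ a - sylvesterHadamard k *ᵥ b) := by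
  rw [sylvesterHadamard, reindex_apply, submatrix_mulVec_equiv, Equiv.symm_symm, appendHalves,
    Function.comp_assoc, Equiv.symm_comp_self, Function.comp_id, fromBlocks_mulVec, neg_mulVec,
    ← sub_eq_add_neg]
  rfl

theorem norm_sylvesterHadamard_succ_mulVec_appendHalves_self :
    ‖sylvesterHadamard (k + 1) *ᵥ appendHalves a a‖ =
      2 * ‖sylvesterHadamard k *ᵥ a‖ := by
  rw [sylvesterHadamard_succ_mulVec_appendHalves, sub_self, norm_appendHalves, norm_zero,
    ← two_smul ℝ, norm_smul, Real.norm_two, max_eq_left (by positivity)]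

theorem norm_sylvesterHadamard_mulVec_appendHalves_appendHalves_neg :
    ‖sylvesterHadamard (k + 2) *ᵥ appendHalves (appendHalves a a) (appendHalves a (-a))‖ =
      2 * ‖sylvesterHadamard k *ᵥ a‖ := by
  simp only [sylvesterHadamard_succ_mulVec_appendHalves, mulVec_neg, appendHalves_add,
    appendHalves_sub, norm_appendHalves, sub_self, add_neg_cancel, sub_neg_eq_add, add_zero,
    zero_add, zero_sub, sub_zero, norm_neg, max_self]
  rw [← two_smul ℝ, norm_smul, Real.norm_two]

end appendHalves

theorem prodEquiv_kronecker_eq_appendHalves {k : ℕ} (v : Fin (2 ^ 2) → ℝ)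
    (u : Fin (2 ^ k) → ℝ) :
    (fun i => v ((prodEquiv k).symm i).1 * u ((prodEquiv k).symm i).2) =
      appendHalves (appendHalves (v 0 • u) (v 1 • u))
        (appendHalves (v 2 • u) (v 3 • u)) := by
  funext i
  obtain ⟨s, rfl⟩ := (sumEquiv (k + 1)).surjective i
  rcases s with t | t <;> obtain ⟨r, rfl⟩ := (sumEquiv k).surjective t <;>
    rcases r with b | b <;>
    simp only [appendHalves, Function.comp_apply, Equiv.symm_apply_apply, Sum.elim_inl,
      Sum.elim_inr, Pi.smul_apply, smul_eq_mul] <;>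
    congr 2 <;>
    simp [prodEquiv, sumEquiv, Fin.ext_iff, pow_succ, Nat.mod_eq_of_lt b.isLt]
  all_goals apply Nat.div_eq_of_lt_le <;> grind

theorem xNat_one : xNat 1 = appendHalves (xNat 0) (xNat 0) := by
  funext i
  simp [appendHalves, xNat]

theorem xNat_add_two (k : ℕ) :
    xNat (k + 2) =
      appendHalves (appendHalves (xNat k) (xNat k)) (appendHalves (xNat k) (-xNat k)) := by
  rw [xNat, prodEquiv_kronecker_eq_appendHalves]
  simp [ySign]

theorem isSignVec_xNat (k : ℕ) : IsSignVec (xNat k) := by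
  induction k using Nat.twoStepInduction with
  | zero => exact fun _ => .inl rfl
  | one => exact fun _ => .inl rfl
  | more k ih _ =>
    have hy : IsSignVec ySign := by
      intro j
      fin_cases j <;> simp [ySign]
    intro i
    rcases hy ((prodEquiv k).symm i).1 with h₁ | h₁ <;>
      rcases ih ((prodEquiv k).symm i).2 with h₂ | h₂ <;>
      simp [xNat, h₁, h₂]

theorem norm_sylvesterHadamard_zero_mulVec_xNat_zero :
    ‖sylvesterHadamard 0 *ᵥ xNat 0‖ = 1 := by
  have : sylvesterHadamard 0 *ᵥ xNat 0 = fun _ => 1 := by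
    funext i
    simp [sylvesterHadamard, xNat, mulVec, dotProduct]
  rw [this, pi_norm_const, norm_one]

theorem norm_sylvesterHadamard_mulVec_xNat (k : ℕ) :
    ‖sylvesterHadamard k *ᵥ xNat k‖ = 2 ^ ((k + 1) / 2) := by
  induction k using Nat.twoStepInduction with
  | zero => exact norm_sylvesterHadamard_zero_mulVec_xNat_zero
  | one =>
    rw [xNat_one, norm_sylvesterHadamard_succ_mulVec_appendHalves_self,
      norm_sylvesterHadamard_zero_mulVec_xNat_zero]
    norm_num
  | more k ih _ =>
    rw [xNat_add_two, norm_sylvesterHadamard_mulVec_appendHalves_appendHalves_neg, ih,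
      ← pow_succ']
    congr 1
    omega

/-- For every `k ≥ 0`, the sign vector `x♮ k ∈ {±1}^{2ᵏ}` satisfies
`‖H k · x♮ k‖_∞ = 2^⌈k/2⌉`; that is, `√2·√(2ᵏ)` if `k` is odd and `√(2ᵏ)` if `k` is
even.  (The norm on `Fin n → ℝ` is the sup norm.) -/
theorem sylvesterHadamard_mulVec_xNat_norm (k : ℕ) :
    IsSignVec (xNat k) ∧
    ‖(sylvesterHadamard k).mulVec (xNat k)‖ = 2 ^ ((k + 1) / 2) ∧
    (Odd k → ‖(sylvesterHadamard k).mulVec (xNat k)‖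
        = Real.sqrt 2 * Real.sqrt (2 ^ k)) ∧
    (Even k → ‖(sylvesterHadamard k).mulVec (xNat k)‖ = Real.sqrt (2 ^ k)) := by
  have hnorm := norm_sylvesterHadamard_mulVec_xNat k
  refine ⟨isSignVec_xNat k, hnorm, ?_, ?_⟩
  · rintro ⟨m, rfl⟩
    rw [hnorm, show (2 * m + 1 + 1) / 2 = m + 1 by omega, ← Real.sqrt_mul zero_le_two,
      show (2 : ℝ) * 2 ^ (2 * m + 1) = (2 ^ (m + 1)) ^ 2 by ring, Real.sqrt_sq (by positivity)]
  · rintro ⟨m, rfl⟩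
    rw [hnorm, show (m + m + 1) / 2 = m by omega, show (2 : ℝ) ^ (m + m) = (2 ^ m) ^ 2 by ring,
      Real.sqrt_sq (by positivity)]
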